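/- arXiv:1811.05209 — 3 statements merged into one kernel-verified Lean document; each statement's English description precedes it below -/
import Mathlib

section
/- Let $n \ge 1$ and $1 < p < \infty$. A weight $w$ on $\mathbb{R}^n$ belongs to the class $C_p$ if and only if there exist constants $C, \delta > 0$ such that for every cube $Q$ with sides parallel to the coordinate axes, $\left( \frac{1}{|Q|} \int_Q w^{1+\delta} \right)^{1/(1+\delta)} \le \frac{C}{|Q|} \int_{\mathbb{R}^n} (M\chi_Q)^p \, w$. -/
open MeasureTheory ENNReal Metric Set Filter

noncomputable section

/-- The uncentered Hardy–Littlewood maximal operator over axis-parallel cubes.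
Axis-parallel cubes in `ℝⁿ = Fin n → ℝ` are exactly the closed balls of the
sup metric, so a cube with center `c` and side length `2r` is `closedBall c r`. -/
def maxOp (n : ℕ) (f : (Fin n → ℝ) → ℝ≥0∞) (x : Fin n → ℝ) : ℝ≥0∞ :=
  ⨆ (c : Fin n → ℝ) (r : ℝ) (_ : 0 < r) (_ : x ∈ closedBall c r),
    (volume (closedBall c r))⁻¹ * ∫⁻ y in closedBall c r, f y

/-- `ℝ≥0∞`-valued characteristic function of a set. -/
def chi (n : ℕ) (Q : Set (Fin n → ℝ)) : (Fin n → ℝ) → ℝ≥0∞ := Q.indicator 1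

/-- The `C_p`-tail of the weight `w` at the cube `Q`: `∫_{ℝⁿ} (Mχ_Q)^p w`. -/
def cpTail (n : ℕ) (p : ℝ) (w : (Fin n → ℝ) → ℝ) (Q : Set (Fin n → ℝ)) : ℝ≥0∞ :=
  ∫⁻ x, (maxOp n (chi n Q) x) ^ p * ENNReal.ofReal (w x)

/-- The `C_p` constant `[w]_{C_p} = sup_Q (∫_Q M(χ_Q w)) / (∫_{ℝⁿ} (Mχ_Q)^p w)`. -/
def cpConst (n : ℕ) (p : ℝ) (w : (Fin n → ℝ) → ℝ) : ℝ≥0∞ :=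
  ⨆ (c : Fin n → ℝ) (r : ℝ) (_ : 0 < r),
    (∫⁻ x in closedBall c r,
        maxOp n ((closedBall c r).indicator fun y => ENNReal.ofReal (w y)) x) /
      cpTail n p w (closedBall c r)

/-!
For a fixed cube `Q`, `K = C ∫ (Mχ_Q)^p w` is just a number, and both conditions are statements
about `w` on `Q` relative to `ℓ = K / |Q|`. Hölder's inequality on `E ⊆ Q` turns the reverse
Hölder inequality into `w(E) ≤ K (|E|/|Q|)^(δ/(1+δ))`. Conversely, testing the `C_p` condition on
the level set `E = {w > t} ∩ Q` gives the weak-type bound `|{w > t} ∩ Q| ≤ |Q| (ℓ/t)^(1/(1-ε))`.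
For `ε = 2δ/(1+2δ)`, i.e. `1/(1-ε) = 1 + 2δ`, the layer-cake formula for `∫_Q w^(1+δ)`, split at
`t = ℓ`, then gives `⨍_Q w^(1+δ) ≤ (1+δ)(1+1/δ) ℓ^(1+δ)`.
-/

section ReverseHolder

variable {α : Type*} [MeasurableSpace α] {μ : Measure α} {Q : Set α} {K : ℝ≥0∞}

lemma setLIntegral_le_of_rpow_average_le {f : α → ℝ≥0∞}
    (hf : AEMeasurable f (μ.restrict Q)) (hQ0 : μ Q ≠ 0) (hQtop : μ Q ≠ ∞) {δ : ℝ} (hδ : 0 < δ)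
    (h : ((μ Q)⁻¹ * ∫⁻ x in Q, f x ^ (1 + δ) ∂μ) ^ (1 / (1 + δ)) ≤ K * (μ Q)⁻¹)
    {E : Set α} (hEQ : E ⊆ Q) :
    ∫⁻ x in E, f x ∂μ ≤ K * (μ E / μ Q) ^ (δ / (1 + δ)) := by
  have hconj : (1 + δ).HolderConjugate ((1 + δ) / δ) :=
    Real.holderConjugate_iff.mpr ⟨by linarith, by field_simp⟩
  have holder := ENNReal.lintegral_mul_le_Lp_mul_Lq (μ.restrict E) hconj
    (hf.mono_measure (Measure.restrict_mono hEQ le_rfl)) (aemeasurable_const (b := 1))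
  simp only [Pi.mul_apply, mul_one, ENNReal.one_rpow, lintegral_const, one_mul,
    Measure.restrict_apply_univ, one_div_div] at holder
  have hexp : 1 / (1 + δ) + -1 = -(δ / (1 + δ)) := by field_simp; ring
  calc ∫⁻ x in E, f x ∂μ
      ≤ (∫⁻ x in Q, f x ^ (1 + δ) ∂μ) ^ (1 / (1 + δ)) * μ E ^ (δ / (1 + δ)) := by
        refine holder.trans ?_
        gcongr
    _ = (μ Q) ^ (1 / (1 + δ)) *
          ((μ Q)⁻¹ * ∫⁻ x in Q, f x ^ (1 + δ) ∂μ) ^ (1 / (1 + δ)) * μ E ^ (δ / (1 + δ)) := by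
        rw [← ENNReal.mul_rpow_of_nonneg _ _ (by positivity), ← mul_assoc,
          ENNReal.mul_inv_cancel hQ0 hQtop, one_mul]
    _ ≤ (μ Q) ^ (1 / (1 + δ)) * (K * (μ Q)⁻¹) * μ E ^ (δ / (1 + δ)) := by gcongr
    _ = K * (μ E / μ Q) ^ (δ / (1 + δ)) := by
        rw [ENNReal.div_rpow_of_nonneg _ _ (by positivity), ENNReal.div_eq_inv_mul,
          ← ENNReal.rpow_neg, ← hexp, ENNReal.rpow_add _ _ hQ0 hQtop, ENNReal.rpow_neg_one]
        ring

lemma measure_lt_inter_le_of_setLIntegral_le {w : α → ℝ} (hQ : MeasurableSet Q)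
    (hw : Measurable w) (hQ0 : μ Q ≠ 0) (hQtop : μ Q ≠ ∞) {ε : ℝ} (hε1 : ε < 1)
    (h : ∀ E ⊆ Q, MeasurableSet E → ∫⁻ x in E, ENNReal.ofReal (w x) ∂μ ≤ K * (μ E / μ Q) ^ ε)
    {t : ℝ} (ht : 0 < t) :
    μ ({x | t < w x} ∩ Q) ≤ μ Q * (K / μ Q / ENNReal.ofReal t) ^ (1 - ε)⁻¹ := by
  set E := {x | t < w x} ∩ Q
  have hEQ : E ⊆ Q := inter_subset_right
  set ρ := μ E / μ Q
  have hμE : μ E = μ Q * ρ := (ENNReal.mul_div_cancel hQ0 hQtop).symm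
  rcases eq_or_ne ρ 0 with hρ0 | hρ0
  · simp [hμE, hρ0]
  have hρtop : ρ ≠ ∞ := ENNReal.div_ne_top (measure_ne_top_of_subset hEQ hQtop) hQ0
  have chebyshev : ρ ^ (1 - ε) * ENNReal.ofReal t * μ Q * ρ ^ ε ≤ K * ρ ^ ε := calc
    ρ ^ (1 - ε) * ENNReal.ofReal t * μ Q * ρ ^ ε = ∫⁻ _ in E, ENNReal.ofReal t ∂μ := by
      rw [setLIntegral_const, hμE, mul_right_comm, mul_right_comm _ _ (ρ ^ ε),
        ← ENNReal.rpow_add _ _ hρ0 hρtop, sub_add_cancel, ENNReal.rpow_one]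
      ring
    _ ≤ ∫⁻ x in E, ENNReal.ofReal (w x) ∂μ :=
      setLIntegral_mono (by fun_prop) fun x hx => ENNReal.ofReal_le_ofReal hx.1.le
    _ ≤ K * ρ ^ ε := h E hEQ ((measurableSet_lt measurable_const hw).inter hQ)
  have hρε : ρ ^ (1 - ε) ≤ K / μ Q / ENNReal.ofReal t := by
    rw [ENNReal.le_div_iff_mul_le (.inl (by simp [ht])) (.inl (by finiteness)),
      ENNReal.le_div_iff_mul_le (.inl hQ0) (.inl hQtop)]
    exact (ENNReal.mul_le_mul_iff_left (by simp [hρ0, hρtop]) (by finiteness)).1 chebyshev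
  calc μ E = μ Q * (ρ ^ (1 - ε)) ^ (1 - ε)⁻¹ := by
        rw [← ENNReal.rpow_mul, mul_inv_cancel₀ (by linarith), ENNReal.rpow_one, hμE]
    _ ≤ _ := by gcongr

lemma lintegral_ofReal_rpow_eq_lintegral_meas_lt_mul {w : α → ℝ} (hw : AEMeasurable w μ)
    {p : ℝ} (hp : 0 < p) :
    ∫⁻ x, ENNReal.ofReal (w x) ^ p ∂μ =
      ENNReal.ofReal p * ∫⁻ t in Ioi 0, μ {x | t < w x} * ENNReal.ofReal (t ^ (p - 1)) := by
  have hmax : ∀ x, ENNReal.ofReal (w x) ^ p = ENNReal.ofReal (max (w x) 0 ^ p) := fun x => by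
    rw [← ENNReal.ofReal_rpow_of_nonneg (le_max_right _ _) hp.le, ENNReal.ofReal_max,
      ENNReal.ofReal_zero, max_zero]
  simp_rw [hmax]
  rw [lintegral_rpow_eq_lintegral_meas_lt_mul (f := fun x => max (w x) 0) μ
    (.of_forall fun _ => le_max_right _ _) (hw.max aemeasurable_const) hp]
  congr 1
  refine setLIntegral_congr_fun measurableSet_Ioi fun t (ht : 0 < t) => ?_
  simp only [lt_max_iff, ht.not_gt, or_false]

lemma lintegral_Ioi_ofReal_rpow_of_lt {s c : ℝ} (hs : s < -1) (hc : 0 < c) :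
    ∫⁻ t in Ioi c, ENNReal.ofReal (t ^ s) = ENNReal.ofReal (-c ^ (s + 1) / (s + 1)) := by
  rw [← ofReal_integral_eq_lintegral_ofReal (integrableOn_Ioi_rpow_of_lt hs hc)
    ((ae_restrict_iff' measurableSet_Ioi).2 (.of_forall fun t ht =>
      Real.rpow_nonneg (hc.trans ht).le _)), integral_Ioi_rpow_of_lt hs hc]

lemma setLIntegral_Ioi_meas_lt_mul_rpow_le {ν : Measure α} {w : α → ℝ} {δ ℓ : ℝ} (hδ : 0 < δ)
    (hℓ : 0 < ℓ)
    (h : ∀ t, 0 < t → ν {x | t < w x} ≤ ν univ * ENNReal.ofReal ((ℓ / t) ^ (1 + 2 * δ))) :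
    ∫⁻ t in Ioi ℓ, ν {x | t < w x} * ENNReal.ofReal (t ^ δ) ≤
      ν univ * ENNReal.ofReal (ℓ ^ (1 + δ) / δ) := calc
  _ ≤ ∫⁻ t in Ioi ℓ, ν univ * ENNReal.ofReal (ℓ ^ (1 + 2 * δ)) * ENNReal.ofReal (t ^ (-1 - δ)) :=
    setLIntegral_mono (by fun_prop) fun t (ht : ℓ < t) => by
      have ht0 := hℓ.trans ht
      refine (mul_le_mul_left (h t ht0) _).trans_eq ?_
      rw [mul_assoc, mul_assoc, ← ENNReal.ofReal_mul (by positivity),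
        ← ENNReal.ofReal_mul (by positivity), Real.div_rpow hℓ.le ht0.le]
      congr 1
      rw [div_mul_eq_mul_div, mul_div_assoc, ← Real.rpow_sub ht0]
      ring_nf
  _ = ν univ * ENNReal.ofReal (ℓ ^ (1 + δ) / δ) := by
    rw [lintegral_const_mul _ (by fun_prop), lintegral_Ioi_ofReal_rpow_of_lt (by linarith) hℓ,
      mul_assoc, ← ENNReal.ofReal_mul (by positivity)]
    congr 2
    rw [show -1 - δ + 1 = -δ by ring, neg_div_neg_eq, mul_div_assoc', ← Real.rpow_add hℓ]
    ring_nf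

lemma lintegral_ofReal_rpow_le_of_meas_lt_le {ν : Measure α} {w : α → ℝ}
    (hw : AEMeasurable w ν) {δ ℓ : ℝ} (hδ : 0 < δ) (hℓ : 0 < ℓ)
    (h : ∀ t, 0 < t → ν {x | t < w x} ≤ ν univ * ENNReal.ofReal ((ℓ / t) ^ (1 + 2 * δ))) :
    ∫⁻ x, ENNReal.ofReal (w x) ^ (1 + δ) ∂ν ≤
      ν univ * ENNReal.ofReal ((1 + δ) * (1 + δ⁻¹) * ℓ ^ (1 + δ)) := by
  have head : ∫⁻ t in Ioc 0 ℓ, ν {x | t < w x} * ENNReal.ofReal (t ^ δ) ≤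
      ν univ * ENNReal.ofReal (ℓ ^ (1 + δ)) := calc
    _ ≤ ∫⁻ _ in Ioc 0 ℓ, ν univ * ENNReal.ofReal (ℓ ^ δ) :=
      setLIntegral_mono measurable_const fun t ht => by
        gcongr
        exacts [subset_univ _, ht.1.le, ht.2]
    _ = ν univ * ENNReal.ofReal (ℓ ^ (1 + δ)) := by
      rw [setLIntegral_const, Real.volume_Ioc, sub_zero, mul_assoc,
        ← ENNReal.ofReal_mul (by positivity), Real.rpow_add hℓ, Real.rpow_one, mul_comm (ℓ ^ δ)]
  calc ∫⁻ x, ENNReal.ofReal (w x) ^ (1 + δ) ∂ν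
      = ENNReal.ofReal (1 + δ) *
          ((∫⁻ t in Ioc 0 ℓ, ν {x | t < w x} * ENNReal.ofReal (t ^ δ)) +
            ∫⁻ t in Ioi ℓ, ν {x | t < w x} * ENNReal.ofReal (t ^ δ)) := by
        rw [lintegral_ofReal_rpow_eq_lintegral_meas_lt_mul hw (by positivity),
          add_sub_cancel_left, ← Ioc_union_Ioi_eq_Ioi hℓ.le,
          lintegral_union measurableSet_Ioi Ioc_disjoint_Ioi_same]
    _ ≤ ENNReal.ofReal (1 + δ) *
          (ν univ * ENNReal.ofReal (ℓ ^ (1 + δ)) + ν univ * ENNReal.ofReal (ℓ ^ (1 + δ) / δ)) := by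
        gcongr
        exact setLIntegral_Ioi_meas_lt_mul_rpow_le hδ hℓ h
    _ = _ := by
        rw [← mul_add, ← ENNReal.ofReal_add (by positivity) (by positivity), mul_left_comm,
          ← ENNReal.ofReal_mul (by positivity)]
        congr 2
        field_simp

lemma rpow_average_le_of_setLIntegral_le_of_measurable {w : α → ℝ} (hQ : MeasurableSet Q)
    (hw : Measurable w) (hQ0 : μ Q ≠ 0) (hQtop : μ Q ≠ ∞) (hK0 : K ≠ 0) (hKtop : K ≠ ∞)
    {δ : ℝ} (hδ : 0 < δ)
    (h : ∀ E ⊆ Q, MeasurableSet E →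
      ∫⁻ x in E, ENNReal.ofReal (w x) ∂μ ≤ K * (μ E / μ Q) ^ (2 * δ / (1 + 2 * δ))) :
    ((μ Q)⁻¹ * ∫⁻ x in Q, ENNReal.ofReal (w x) ^ (1 + δ) ∂μ) ^ (1 / (1 + δ)) ≤
      ENNReal.ofReal (((1 + δ) * (1 + δ⁻¹)) ^ (1 / (1 + δ))) * K * (μ Q)⁻¹ := by
  set ℓ := (K / μ Q).toReal
  have hKℓ : K / μ Q = ENNReal.ofReal ℓ :=
    (ENNReal.ofReal_toReal (ENNReal.div_ne_top hKtop hQ0)).symm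
  have hℓ : 0 < ℓ := ENNReal.toReal_pos (by simp [hK0, hQtop]) (ENNReal.div_ne_top hKtop hQ0)
  have hε : 2 * δ / (1 + 2 * δ) < 1 := by rw [div_lt_one (by positivity)]; linarith
  have hexp : (1 - 2 * δ / (1 + 2 * δ))⁻¹ = 1 + 2 * δ := by field_simp; ring
  have strong := lintegral_ofReal_rpow_le_of_meas_lt_le (ν := μ.restrict Q)
    hw.aemeasurable.restrict hδ hℓ fun t ht => by
      have weak := measure_lt_inter_le_of_setLIntegral_le hQ hw hQ0 hQtop hε h ht
      rwa [hexp, hKℓ, ← ENNReal.ofReal_div_of_pos ht,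
        ENNReal.ofReal_rpow_of_nonneg (by positivity) (by positivity),
        ← Measure.restrict_apply' hQ, ← Measure.restrict_apply_univ Q] at weak
  rw [Measure.restrict_apply_univ] at strong
  calc _ ≤ ((μ Q)⁻¹ * (μ Q * ENNReal.ofReal ((1 + δ) * (1 + δ⁻¹) * ℓ ^ (1 + δ)))) ^
          (1 / (1 + δ)) := by
        gcongr
    _ = _ := by
        rw [← mul_assoc, ENNReal.inv_mul_cancel hQ0 hQtop, one_mul,
          ENNReal.ofReal_rpow_of_nonneg (by positivity) (by positivity),
          Real.mul_rpow (by positivity) (by positivity), ← Real.rpow_mul hℓ.le,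
          mul_one_div_cancel (by positivity), Real.rpow_one, ENNReal.ofReal_mul (by positivity),
          ← hKℓ, div_eq_mul_inv K, mul_assoc]

lemma rpow_average_le_of_setLIntegral_le {w : α → ℝ} (hQ : MeasurableSet Q)
    (hw : AEMeasurable w (μ.restrict Q)) (hQ0 : μ Q ≠ 0) (hQtop : μ Q ≠ ∞) {δ : ℝ} (hδ : 0 < δ)
    (h : ∀ E ⊆ Q, MeasurableSet E →
      ∫⁻ x in E, ENNReal.ofReal (w x) ∂μ ≤ K * (μ E / μ Q) ^ (2 * δ / (1 + 2 * δ))) :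
    ((μ Q)⁻¹ * ∫⁻ x in Q, ENNReal.ofReal (w x) ^ (1 + δ) ∂μ) ^ (1 / (1 + δ)) ≤
      ENNReal.ofReal (((1 + δ) * (1 + δ⁻¹)) ^ (1 / (1 + δ))) * K * (μ Q)⁻¹ := by
  rcases eq_or_ne K ∞ with rfl | hKtop
  · rw [ENNReal.mul_top (by positivity), ENNReal.top_mul (by simp [hQtop])]
    exact le_top
  rcases eq_or_ne K 0 with rfl | hK0
  · have hQw : ∫⁻ x in Q, ENNReal.ofReal (w x) ∂μ = 0 := by simpa using h Q subset_rfl hQ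
    have hw0 : ∀ᵐ x ∂μ.restrict Q, ENNReal.ofReal (w x) = 0 :=
      (lintegral_eq_zero_iff' (by fun_prop)).1 hQw
    rw [lintegral_congr_ae (hw0.mono fun x hx => by
      rw [hx, ENNReal.zero_rpow_of_pos (by positivity : 0 < 1 + δ)])]
    simp [add_pos_of_pos_of_nonneg one_pos hδ.le]
  have hwg : (fun x => ENNReal.ofReal (w x)) =ᵐ[μ.restrict Q]
      fun x => ENNReal.ofReal (hw.mk w x) :=
    hw.ae_eq_mk.mono fun x hx => congrArg ENNReal.ofReal hx
  rw [lintegral_congr_ae (hwg.mono fun x hx => congrArg (· ^ (1 + δ)) hx)]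
  exact rpow_average_le_of_setLIntegral_le_of_measurable hQ hw.measurable_mk hQ0 hQtop hK0 hKtop hδ
    fun E hEQ hE =>
      (lintegral_congr_ae (ae_restrict_of_ae_restrict_of_subset hEQ hwg)).symm.trans_le (h E hEQ hE)

end ReverseHolder

theorem statement1_general (n : ℕ) (p : ℝ)
    (w : (Fin n → ℝ) → ℝ) (hloc : LocallyIntegrable w volume) :
    (∃ C > (0 : ℝ), ∃ ε > (0 : ℝ), ∀ (c : Fin n → ℝ) (r : ℝ), 0 < r →
        ∀ E ⊆ closedBall c r, MeasurableSet E →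
          ∫⁻ x in E, ENNReal.ofReal (w x) ≤
            ENNReal.ofReal C * (volume E / volume (closedBall c r)) ^ ε *
              cpTail n p w (closedBall c r)) ↔
    (∃ C > (0 : ℝ), ∃ δ > (0 : ℝ), ∀ (c : Fin n → ℝ) (r : ℝ), 0 < r →
        ((volume (closedBall c r))⁻¹ *
            ∫⁻ x in closedBall c r, ENNReal.ofReal (w x) ^ (1 + δ)) ^ (1 / (1 + δ)) ≤
          ENNReal.ofReal C * (volume (closedBall c r))⁻¹ *
            cpTail n p w (closedBall c r)) := by
  have hw : AEMeasurable w volume := hloc.aestronglyMeasurable.aemeasurable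
  have hQ0 : ∀ (c : Fin n → ℝ) (r : ℝ), 0 < r → volume (closedBall c r) ≠ 0 :=
    fun c _ hr => (measure_closedBall_pos volume c hr).ne'
  have hQtop : ∀ (c : Fin n → ℝ) (r : ℝ), volume (closedBall c r) ≠ ∞ :=
    fun _ _ => measure_closedBall_lt_top.ne
  constructor
  · rintro ⟨C, hC, ε, hε, h⟩
    refine ⟨((1 + ε / 2) * (1 + (ε / 2)⁻¹)) ^ (1 / (1 + ε / 2)) * C, by positivity, ε / 2,
      by positivity, fun c r hr => ?_⟩
    refine (rpow_average_le_of_setLIntegral_le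
      (K := ENNReal.ofReal C * cpTail n p w (closedBall c r)) measurableSet_closedBall
      hw.restrict (hQ0 c r hr) (hQtop c r) (half_pos hε)
      fun E hEQ hE => (h c r hr E hEQ hE).trans ?_).trans_eq ?_
    · rw [mul_right_comm]
      refine mul_le_mul_right (ENNReal.rpow_le_rpow_of_exponent_ge
        (ENNReal.div_le_of_le_mul (by simpa using measure_mono (μ := volume) hEQ)) ?_) _
      rw [div_le_iff₀ (by positivity)]
      nlinarith
    · rw [ENNReal.ofReal_mul (by positivity)]
      ring
  · rintro ⟨C, hC, δ, hδ, h⟩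
    refine ⟨C, hC, δ / (1 + δ), by positivity, fun c r hr E hEQ _ => ?_⟩
    rw [mul_right_comm]
    exact setLIntegral_le_of_rpow_average_le (by fun_prop) (hQ0 c r hr) (hQtop c r) hδ
      ((h c r hr).trans_eq (mul_right_comm _ _ _)) hEQ

/-- **Reverse Hölder characterization of `C_p`.** A weight belongs to `C_p`
(i.e. satisfies `w(E) ≤ C (|E|/|Q|)^ε ∫ (Mχ_Q)^p w`) iff it satisfies the weak
reverse Hölder inequality `(⨍_Q w^(1+δ))^(1/(1+δ)) ≤ (C/|Q|) ∫ (Mχ_Q)^p w`. -/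
theorem statement1 (n : ℕ) (hn : 1 ≤ n) (p : ℝ) (hp : 1 < p)
    (w : (Fin n → ℝ) → ℝ) (hw : ∀ x, 0 ≤ w x) (hloc : LocallyIntegrable w volume) :
    (∃ C > (0 : ℝ), ∃ ε > (0 : ℝ), ∀ (c : Fin n → ℝ) (r : ℝ), 0 < r →
        ∀ E ⊆ closedBall c r, MeasurableSet E →
          ∫⁻ x in E, ENNReal.ofReal (w x) ≤
            ENNReal.ofReal C * (volume E / volume (closedBall c r)) ^ ε *
              cpTail n p w (closedBall c r)) ↔
    (∃ C > (0 : ℝ), ∃ δ > (0 : ℝ), ∀ (c : Fin n → ℝ) (r : ℝ), 0 < r →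
        ((volume (closedBall c r))⁻¹ *
            ∫⁻ x in closedBall c r, ENNReal.ofReal (w x) ^ (1 + δ)) ^ (1 / (1 + δ)) ≤
          ENNReal.ofReal C * (volume (closedBall c r))⁻¹ *
            cpTail n p w (closedBall c r)) :=
  statement1_general n p w hloc

end
end

section
/- Let $n \ge 1$. For every $R \ge 1$ there is a constant $C = C(n, R)$ such that for every nonempty open set $\Omega \subsetneq \mathbb{R}^n$, there exists a countable family of pairwise disjoint cubes $\{Q_j\}$ with $\Omega = \bigcup_j Q_j$, such that for every $j$, $5R \le \frac{\operatorname{dist}(Q_j, \mathbb{R}^n \setminus \Omega)}{\operatorname{diam}(Q_j)} \le 15R$, and moreover $\sum_j \chi_{R Q_j}(x) \le C \, \chi_\Omega(x)$ for every $x \in \mathbb{R}^n$. -/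
open MeasureTheory ENNReal Metric Set Filter

noncomputable section

/-- Euclidean distance on `Fin n → ℝ` (the ambient sup metric is used for cubes). -/
def eucDist {n : ℕ} (x y : Fin n → ℝ) : ℝ := Real.sqrt (∑ i, (x i - y i) ^ 2)

/-- Euclidean diameter of a set. -/
def eucDiam {n : ℕ} (s : Set (Fin n → ℝ)) : ℝ :=
  sSup {d | ∃ a ∈ s, ∃ b ∈ s, d = eucDist a b}

/-- Euclidean distance between two sets. -/
def eucSetDist {n : ℕ} (s t : Set (Fin n → ℝ)) : ℝ :=
  sInf {d | ∃ a ∈ s, ∃ b ∈ t, d = eucDist a b}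

/-- Half-open axis-parallel cube with center `c` and side length `2r`
(half-open so that pairwise disjoint cubes can tile an open set). -/
def hCube {n : ℕ} (c : Fin n → ℝ) (r : ℝ) : Set (Fin n → ℝ) :=
  {x | ∀ i, c i - r ≤ x i ∧ x i < c i + r}

/-! Call a dyadic cube admissible when its distance to `Ωᶜ` is at least `5R` times its diameter,
and take as Whitney cubes the maximal admissible dyadic cubes. Admissibility passes to dyadic
subcubes, so every point of `Ω` lies in exactly one Whitney cube; the parent of a Whitney cube is
not admissible, which caps the ratio at `12R`. If `x` lies in the `R`-dilate of a Whitney cube `Q`,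
then `dist(x, Ωᶜ)` is comparable to `diam Q`, so the Whitney cubes whose dilates contain `x` have
comparable volumes and lie in a fixed cube around `x`; being disjoint, there are at most
`(3(R+1))ⁿ` of them. -/

section EuclideanDistance

variable {n : ℕ}

lemma eucDist_eq_dist_toLp (x y : Fin n → ℝ) :
    eucDist x y = dist (WithLp.toLp 2 x) (WithLp.toLp 2 y) := by
  simp [eucDist, EuclideanSpace.dist_eq, Real.dist_eq, sq_abs]

lemma eucDist_nonneg (x y : Fin n → ℝ) : 0 ≤ eucDist x y := Real.sqrt_nonneg _

lemma eucDist_self (x : Fin n → ℝ) : eucDist x x = 0 := by simp [eucDist]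

lemma eucDist_comm (x y : Fin n → ℝ) : eucDist x y = eucDist y x := by
  simp only [eucDist_eq_dist_toLp, dist_comm]

lemma eucDist_triangle (x y z : Fin n → ℝ) : eucDist x z ≤ eucDist x y + eucDist y z := by
  simp only [eucDist_eq_dist_toLp]
  exact dist_triangle _ _ _

lemma eucDist_le_sqrt_mul {x y : Fin n → ℝ} {s : ℝ} (hs : 0 ≤ s)
    (h : ∀ i, |x i - y i| ≤ s) : eucDist x y ≤ √n * s := by
  calc eucDist x y ≤ √(∑ _i : Fin n, s ^ 2) :=
        Real.sqrt_le_sqrt <| Finset.sum_le_sum fun i _ =>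
          sq_le_sq' (abs_le.1 (h i)).1 (abs_le.1 (h i)).2
    _ = √n * s := by simp [Real.sqrt_mul, Real.sqrt_sq hs]

lemma eucDist_of_forall_sub_eq {x y : Fin n → ℝ} {t : ℝ} (h : ∀ i, x i - y i = t) :
    eucDist x y = √n * |t| := by
  simp [eucDist, h, Real.sqrt_mul, Real.sqrt_sq_eq_abs]

lemma eucDist_le_sqrt_mul_dist (x y : Fin n → ℝ) : eucDist x y ≤ √n * dist x y :=
  eucDist_le_sqrt_mul dist_nonneg fun i => by
    rw [← Real.dist_eq]
    exact dist_le_pi_dist x y i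

lemma dist_le_eucDist (x y : Fin n → ℝ) : dist x y ≤ eucDist x y := by
  refine (dist_pi_le_iff (eucDist_nonneg x y)).2 fun i => ?_
  rw [Real.dist_eq, ← Real.sqrt_sq_eq_abs]
  exact Real.sqrt_le_sqrt <|
    Finset.single_le_sum (f := fun j => (x j - y j) ^ 2) (fun j _ => sq_nonneg _)
      (Finset.mem_univ i)

end EuclideanDistance

section SetDistance

variable {n : ℕ} {s s' t : Set (Fin n → ℝ)} {a b x : Fin n → ℝ} {d : ℝ}

lemma eucSetDist_le (ha : a ∈ s) (hb : b ∈ t) : eucSetDist s t ≤ eucDist a b :=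
  csInf_le ⟨0, by rintro _ ⟨a, -, b, -, rfl⟩; exact eucDist_nonneg a b⟩ ⟨a, ha, b, hb, rfl⟩

lemma le_eucSetDist (hs : s.Nonempty) (ht : t.Nonempty)
    (h : ∀ a ∈ s, ∀ b ∈ t, d ≤ eucDist a b) : d ≤ eucSetDist s t := by
  obtain ⟨a, ha⟩ := hs
  obtain ⟨b, hb⟩ := ht
  refine le_csInf ⟨_, a, ha, b, hb, rfl⟩ ?_
  rintro _ ⟨a, ha, b, hb, rfl⟩
  exact h a ha b hb

lemma eucSetDist_anti_left (hs' : s'.Nonempty) (ht : t.Nonempty) (h : s' ⊆ s) :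
    eucSetDist s t ≤ eucSetDist s' t :=
  le_eucSetDist hs' ht fun _ ha _ hb => eucSetDist_le (h ha) hb

lemma eucSetDist_le_add (hx : x ∈ s) (hs' : s'.Nonempty) (ht : t.Nonempty)
    (hD : ∀ a ∈ s', eucDist x a ≤ d) : eucSetDist s t ≤ eucSetDist s' t + d := by
  refine le_of_forall_pos_lt_add fun ε hε => ?_
  obtain ⟨a₀, ha₀⟩ := hs'
  obtain ⟨b₀, hb₀⟩ := ht
  obtain ⟨_, ⟨a, ha, b, hb, rfl⟩, hab⟩ := exists_lt_of_csInf_lt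
    (s := {d | ∃ a ∈ s', ∃ b ∈ t, d = eucDist a b}) ⟨_, a₀, ha₀, b₀, hb₀, rfl⟩
    (lt_add_of_pos_right (eucSetDist s' t) hε)
  calc eucSetDist s t ≤ eucDist x b := eucSetDist_le hx hb
    _ ≤ eucDist x a + eucDist a b := eucDist_triangle x a b
    _ < eucSetDist s' t + d + ε := by linarith [hD a ha]

lemma eucSetDist_singleton_pos {Ω : Set (Fin n → ℝ)} (hΩ : IsOpen Ω) (hc : Ωᶜ.Nonempty)
    (hx : x ∈ Ω) : 0 < eucSetDist {x} Ωᶜ := by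
  obtain ⟨ε, hε, hball⟩ := Metric.isOpen_iff.1 hΩ x hx
  refine hε.trans_le (le_eucSetDist (singleton_nonempty x) hc ?_)
  rintro a rfl b hb
  exact (not_lt.1 fun h => hb (hball (mem_ball'.2 h))).trans (dist_le_eucDist a b)

end SetDistance

section Cubes

variable {n : ℕ} {c x y : Fin n → ℝ} {r r' : ℝ}

lemma center_mem_hCube (hr : 0 < r) : c ∈ hCube c r :=
  fun _ => ⟨by linarith, by linarith⟩

lemma abs_sub_center_le_of_mem_hCube (hx : x ∈ hCube c r) (i : Fin n) : |x i - c i| ≤ r :=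
  abs_le.2 ⟨by linarith [(hx i).1], by linarith [(hx i).2]⟩

lemma eucDist_center_le_of_mem_hCube (hr : 0 ≤ r) (hx : x ∈ hCube c r) :
    eucDist c x ≤ √n * r :=
  eucDist_le_sqrt_mul hr fun i => by
    rw [abs_sub_comm]
    exact abs_sub_center_le_of_mem_hCube hx i

lemma eucDist_le_of_mem_hCube (hr : 0 ≤ r) (hx : x ∈ hCube c r) (hy : y ∈ hCube c r) :
    eucDist x y ≤ √n * (2 * r) :=
  eucDist_le_sqrt_mul (by linarith) fun i =>
    abs_le.2 ⟨by linarith [(hx i).1, (hy i).2], by linarith [(hx i).2, (hy i).1]⟩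

lemma hCube_mono (h : r ≤ r') : hCube c r ⊆ hCube c r' :=
  fun _ hx i => ⟨by linarith [(hx i).1], by linarith [(hx i).2]⟩

lemma hCube_subset_hCube_of_mem (hx : x ∈ hCube c r') : hCube c r ⊆ hCube x (r + r') :=
  fun _ hy i => ⟨by linarith [(hx i).2, (hy i).1], by linarith [(hx i).1, (hy i).2]⟩

lemma hCube_eq_pi (c : Fin n → ℝ) (r : ℝ) :
    hCube c r = univ.pi fun i => Ico (c i - r) (c i + r) := by
  ext x
  simp [hCube]

lemma measurableSet_hCube (c : Fin n → ℝ) (r : ℝ) : MeasurableSet (hCube c r) := by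
  rw [hCube_eq_pi]
  exact .univ_pi fun _ => measurableSet_Ico

lemma volume_hCube (c : Fin n → ℝ) (hr : 0 ≤ r) :
    volume (hCube c r) = ENNReal.ofReal ((2 * r) ^ n) := by
  have hside : ∀ i, c i + r - (c i - r) = 2 * r := fun _ => by ring
  simp only [hCube_eq_pi, volume_pi_pi, Real.volume_Ico, hside, Finset.prod_const,
    Finset.card_univ, Fintype.card_fin, ENNReal.ofReal_pow (by linarith : 0 ≤ 2 * r)]

lemma eucDiam_hCube (c : Fin n → ℝ) (hr : 0 < r) : eucDiam (hCube c r) = √n * (2 * r) := by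
  refine csSup_eq_of_forall_le_of_forall_lt_exists_gt
    ⟨_, c, center_mem_hCube hr, c, center_mem_hCube hr, rfl⟩ ?_ fun w hw => ?_
  · rintro _ ⟨a, ha, b, hb, rfl⟩
    exact eucDist_le_of_mem_hCube hr.le ha hb
  -- the corners `c - r` and `c - r + t` with `t < 2r` close to `2r`
  obtain ⟨t, ht0, htw, ht2r⟩ : ∃ t, 0 ≤ t ∧ w < √n * t ∧ t < 2 * r := by
    rcases (Real.sqrt_nonneg n).eq_or_lt with h0 | hpos
    · exact ⟨0, le_rfl, by rw [← h0] at hw ⊢; linarith, by linarith⟩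
    · obtain ⟨t, hwt, ht⟩ :=
        exists_between (max_lt ((div_lt_iff₀' hpos).2 hw) (by linarith : 0 < 2 * r))
      exact ⟨t, (le_max_right _ _).trans hwt.le,
        (div_lt_iff₀' hpos).1 ((le_max_left _ _).trans_lt hwt), ht⟩
  refine ⟨_, ⟨fun i => c i - r, fun i => ⟨le_rfl, by linarith⟩,
    fun i => c i - r + t, fun i => ⟨by linarith, by linarith⟩, rfl⟩, ?_⟩
  rw [eucDist_of_forall_sub_eq (t := -t) fun i => by ring, abs_neg, abs_of_nonneg ht0]
  exact htw

end Cubes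

section Dyadic

variable {n : ℕ}

def dyadicIndex (k : ℤ) (x : Fin n → ℝ) : Fin n → ℤ := fun i => ⌊x i / 2 ^ k⌋

def dyadicCenter (k : ℤ) (m : Fin n → ℤ) : Fin n → ℝ := fun i => (m i + 1 / 2) * 2 ^ k

/-- `dyadicCube k m = ∏ᵢ [mᵢ 2ᵏ, (mᵢ + 1) 2ᵏ)`, see `mem_dyadicCube_iff`. -/
def dyadicCube (k : ℤ) (m : Fin n → ℤ) : Set (Fin n → ℝ) := hCube (dyadicCenter k m) (2 ^ k / 2)

lemma mem_dyadicCube_iff {k : ℤ} {m : Fin n → ℤ} {x : Fin n → ℝ} :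
    x ∈ dyadicCube k m ↔ dyadicIndex k x = m := by
  have hk : (0 : ℝ) < 2 ^ k := by positivity
  simp only [dyadicCube, hCube, dyadicCenter, dyadicIndex, funext_iff,
    Int.floor_eq_iff, le_div_iff₀ hk, div_lt_iff₀ hk]
  refine forall_congr' fun i => and_congr ?_ ?_ <;> constructor <;> intro h <;> linarith

lemma mem_dyadicCube_dyadicIndex (k : ℤ) (x : Fin n → ℝ) : x ∈ dyadicCube k (dyadicIndex k x) :=
  mem_dyadicCube_iff.2 rfl

lemma dyadicIndex_eq_of_le {j k : ℤ} (hjk : j ≤ k) {x y : Fin n → ℝ}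
    (h : dyadicIndex j x = dyadicIndex j y) : dyadicIndex k x = dyadicIndex k y := by
  obtain ⟨d, rfl⟩ : ∃ d : ℕ, k = j + d := ⟨(k - j).toNat, by omega⟩
  have hsplit : ∀ t : ℝ, ⌊t / 2 ^ (j + d : ℤ)⌋ = ⌊t / 2 ^ j⌋ / (2 ^ d : ℕ) := fun t => by
    rw [← Int.floor_div_natCast, zpow_add₀ two_ne_zero, div_mul_eq_div_div]
    push_cast
    rfl
  funext i
  have hi := congrFun h i
  simp only [dyadicIndex] at hi ⊢
  rw [hsplit, hsplit, hi]

lemma dyadicCube_subset_of_le {j k : ℤ} (hjk : j ≤ k) (x : Fin n → ℝ) :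
    dyadicCube j (dyadicIndex j x) ⊆ dyadicCube k (dyadicIndex k x) := fun _ hy =>
  mem_dyadicCube_iff.2 (dyadicIndex_eq_of_le hjk (mem_dyadicCube_iff.1 hy))

lemma eucDist_le_of_mem_dyadicCube {k : ℤ} {m : Fin n → ℤ} {x y : Fin n → ℝ}
    (hx : x ∈ dyadicCube k m) (hy : y ∈ dyadicCube k m) : eucDist x y ≤ √n * 2 ^ k := by
  simpa [mul_div_cancel₀] using eucDist_le_of_mem_hCube (by positivity) hx hy

lemma eucDiam_dyadicCube (k : ℤ) (m : Fin n → ℤ) : eucDiam (dyadicCube k m) = √n * 2 ^ k := by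
  rw [dyadicCube, eucDiam_hCube _ (by positivity)]
  ring

end Dyadic

section Counting

variable {α ι : Type*}

lemma card_mul_le_measure_of_pairwiseDisjoint [MeasurableSpace α] {μ : Measure α} {S : Finset ι}
    {E : ι → Set α} {B : Set α} {a : ℝ≥0∞} (hd : (S : Set ι).PairwiseDisjoint E)
    (hm : ∀ i ∈ S, MeasurableSet (E i)) (hB : ∀ i ∈ S, E i ⊆ B) (ha : ∀ i ∈ S, a ≤ μ (E i)) :
    S.card * a ≤ μ B :=
  calc S.card * a = ∑ _i ∈ S, a := by rw [Finset.sum_const, nsmul_eq_mul]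
    _ ≤ ∑ i ∈ S, μ (E i) := Finset.sum_le_sum ha
    _ = μ (⋃ i ∈ S, E i) := (measure_biUnion_finset hd hm).symm
    _ ≤ μ B := measure_mono (iUnion₂_subset hB)

lemma tsum_indicator_one_le {E : ι → Set α} {x : α} {B : ℝ≥0∞}
    (h : ∀ F : Finset ι, (∀ i ∈ F, x ∈ E i) → (F.card : ℝ≥0∞) ≤ B) :
    ∑' i, (E i).indicator 1 x ≤ B := by
  classical
  rw [ENNReal.tsum_eq_iSup_sum]
  refine iSup_le fun F => ?_
  have hsum : ∑ i ∈ F, (E i).indicator (1 : α → ℝ≥0∞) x = (F.filter fun i => x ∈ E i).card := by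
    simp [Set.indicator_apply]
  rw [hsum]
  exact h _ fun i hi => (Finset.mem_filter.1 hi).2

end Counting

namespace Whitney

variable {n : ℕ} {R : ℝ} {Ω : Set (Fin n → ℝ)} {x y : Fin n → ℝ} {j k : ℤ}
  {p : ℤ × (Fin n → ℤ)}

def IsAdmissible (R : ℝ) (Ω : Set (Fin n → ℝ)) (k : ℤ) (m : Fin n → ℤ) : Prop :=
  5 * R * (√n * 2 ^ k) ≤ eucSetDist (dyadicCube k m) Ωᶜ

def IsStoppingLevel (R : ℝ) (Ω : Set (Fin n → ℝ)) (x : Fin n → ℝ) (k : ℤ) : Prop :=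
  IsAdmissible R Ω k (dyadicIndex k x) ∧ ¬IsAdmissible R Ω (k + 1) (dyadicIndex (k + 1) x)

/-- The Whitney cubes of `Ω`, encoded as pairs `(k, m)` standing for `dyadicCube k m`. -/
def indices (R : ℝ) (Ω : Set (Fin n → ℝ)) : Set (ℤ × (Fin n → ℤ)) :=
  {p | ∃ x, IsStoppingLevel R Ω x p.1 ∧ dyadicIndex p.1 x = p.2}

lemma isAdmissible_of_le (hR : 0 ≤ R) (hc : Ωᶜ.Nonempty) (hjk : j ≤ k)
    (h : IsAdmissible R Ω k (dyadicIndex k x)) : IsAdmissible R Ω j (dyadicIndex j x) :=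
  calc 5 * R * (√n * 2 ^ j) ≤ 5 * R * (√n * 2 ^ k) := by gcongr; norm_num
    _ ≤ _ := h
    _ ≤ _ := eucSetDist_anti_left ⟨x, mem_dyadicCube_dyadicIndex j x⟩ hc
      (dyadicCube_subset_of_le hjk x)

lemma IsAdmissible.le_eucSetDist_singleton (hc : Ωᶜ.Nonempty) {m : Fin n → ℤ}
    (h : IsAdmissible R Ω k m) (hy : y ∈ dyadicCube k m) :
    5 * R * (√n * 2 ^ k) ≤ eucSetDist {y} Ωᶜ := by
  refine h.trans ?_
  simpa using eucSetDist_le_add hy (singleton_nonempty y) hc (d := 0) (by simp [eucDist_self])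

lemma exists_isAdmissible (hR : 0 ≤ R) (hΩ : IsOpen Ω) (hc : Ωᶜ.Nonempty) (hx : x ∈ Ω) :
    ∃ k, IsAdmissible R Ω k (dyadicIndex k x) := by
  have hδ : 0 < eucSetDist {x} Ωᶜ := eucSetDist_singleton_pos hΩ hc hx
  have hK : 0 < (5 * R + 1) * √n + 1 := by positivity
  obtain ⟨k, hk, -⟩ := exists_mem_Ioc_zpow (div_pos hδ hK) one_lt_two
  refine ⟨k, ?_⟩
  have hxk := mem_dyadicCube_dyadicIndex k x
  have hle : eucSetDist {x} Ωᶜ ≤ eucSetDist (dyadicCube k (dyadicIndex k x)) Ωᶜ + √n * 2 ^ k :=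
    eucSetDist_le_add rfl ⟨x, hxk⟩ hc fun a ha => eucDist_le_of_mem_dyadicCube hxk ha
  have hk' := (lt_div_iff₀ hK).1 hk
  have h2k : (0 : ℝ) < 2 ^ k := by positivity
  unfold IsAdmissible
  linarith

lemma exists_not_isAdmissible (hn : 1 ≤ n) (hR : 0 < R) (hc : Ωᶜ.Nonempty) (x : Fin n → ℝ) :
    ∃ k, ¬IsAdmissible R Ω k (dyadicIndex k x) := by
  have hpos : 0 < 5 * R * √n := by
    have : 0 < √(n : ℝ) := Real.sqrt_pos.2 (Nat.cast_pos.2 hn)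
    positivity
  obtain ⟨N, hN⟩ := pow_unbounded_of_one_lt (eucSetDist {x} Ωᶜ / (5 * R * √n)) one_lt_two
  refine ⟨N, fun h => ?_⟩
  have hle := h.le_eucSetDist_singleton hc (mem_dyadicCube_dyadicIndex _ x)
  rw [zpow_natCast] at hle
  rw [div_lt_iff₀ hpos] at hN
  linarith

lemma exists_isStoppingLevel (hn : 1 ≤ n) (hR : 0 < R) (hΩ : IsOpen Ω) (hc : Ωᶜ.Nonempty)
    (hx : x ∈ Ω) : ∃ k, IsStoppingLevel R Ω x k := by
  classical
  obtain ⟨k₀, hk₀⟩ := exists_not_isAdmissible hn hR hc x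
  have hbdd : ∃ b, ∀ k, IsAdmissible R Ω k (dyadicIndex k x) → k ≤ b :=
    ⟨k₀, fun k hk => le_of_not_gt fun hlt => hk₀ (isAdmissible_of_le hR.le hc hlt.le hk)⟩
  obtain ⟨k, hk, hmax⟩ := Int.exists_greatest_of_bdd hbdd (exists_isAdmissible hR.le hΩ hc hx)
  exact ⟨k, hk, fun h => by linarith [hmax _ h]⟩

lemma IsStoppingLevel.eq (hR : 0 ≤ R) (hc : Ωᶜ.Nonempty) (hj : IsStoppingLevel R Ω x j)
    (hk : IsStoppingLevel R Ω x k) : j = k := by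
  rcases lt_trichotomy j k with h | h | h
  · exact (hj.2 (isAdmissible_of_le hR hc h hk.1)).elim
  · exact h
  · exact (hk.2 (isAdmissible_of_le hR hc h hj.1)).elim

lemma IsStoppingLevel.of_mem (h : IsStoppingLevel R Ω x k)
    (hy : y ∈ dyadicCube k (dyadicIndex k x)) : IsStoppingLevel R Ω y k := by
  have hk := mem_dyadicCube_iff.1 hy
  have hk' := dyadicIndex_eq_of_le (Int.le_add_one le_rfl) hk
  unfold IsStoppingLevel
  rwa [hk, hk']

lemma isStoppingLevel_of_mem_indices (hp : p ∈ indices R Ω) (hy : y ∈ dyadicCube p.1 p.2) :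
    IsStoppingLevel R Ω y p.1 := by
  obtain ⟨x, hx, hxp⟩ := hp
  exact hx.of_mem (hxp ▸ hy)

lemma isAdmissible_of_mem_indices (hp : p ∈ indices R Ω) : IsAdmissible R Ω p.1 p.2 := by
  obtain ⟨x, hx, hxp⟩ := hp
  exact hxp ▸ hx.1

lemma pairwiseDisjoint_indices (hR : 0 ≤ R) (hc : Ωᶜ.Nonempty) :
    (indices R Ω).PairwiseDisjoint fun p => dyadicCube p.1 p.2 := by
  intro p hp q hq hpq
  refine disjoint_left.2 fun y hyp hyq => hpq ?_
  have hlevel := (isStoppingLevel_of_mem_indices hp hyp).eq hR hc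
    (isStoppingLevel_of_mem_indices hq hyq)
  refine Prod.ext hlevel ?_
  rw [← mem_dyadicCube_iff.1 hyp, ← mem_dyadicCube_iff.1 hyq, hlevel]

lemma exists_mem_indices (hn : 1 ≤ n) (hR : 0 < R) (hΩ : IsOpen Ω) (hc : Ωᶜ.Nonempty)
    (hx : x ∈ Ω) : ∃ p ∈ indices R Ω, x ∈ dyadicCube p.1 p.2 := by
  obtain ⟨k, hk⟩ := exists_isStoppingLevel hn hR hΩ hc hx
  exact ⟨(k, dyadicIndex k x), ⟨x, hk, rfl⟩, mem_dyadicCube_dyadicIndex k x⟩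

/-- The parent cube is not admissible, and the cube is at most one parent diameter farther from
`Ωᶜ` than its parent. -/
lemma eucSetDist_le_of_mem_indices (hR : 1 ≤ R) (hc : Ωᶜ.Nonempty) (hp : p ∈ indices R Ω) :
    eucSetDist (dyadicCube p.1 p.2) Ωᶜ ≤ 12 * R * (√n * 2 ^ p.1) := by
  obtain ⟨x, ⟨-, hparent⟩, hxp⟩ := hp
  rw [← hxp]
  have hx := mem_dyadicCube_dyadicIndex (p.1 + 1) x
  have hstep : eucSetDist (dyadicCube p.1 (dyadicIndex p.1 x)) Ωᶜ ≤
      eucSetDist (dyadicCube (p.1 + 1) (dyadicIndex (p.1 + 1) x)) Ωᶜ + √n * 2 ^ (p.1 + 1) :=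
    eucSetDist_le_add (mem_dyadicCube_dyadicIndex p.1 x) ⟨x, hx⟩ hc
      fun a ha => eucDist_le_of_mem_dyadicCube hx ha
  unfold IsAdmissible at hparent
  rw [zpow_add_one₀ two_ne_zero] at hstep hparent
  have hR' : 1 * (√n * 2 ^ p.1) ≤ R * (√n * 2 ^ p.1) :=
    mul_le_mul_of_nonneg_right hR (by positivity)
  linarith

lemma ratio_mem_Icc (hn : 1 ≤ n) (hR : 1 ≤ R) (hc : Ωᶜ.Nonempty) (hp : p ∈ indices R Ω) :
    5 * R ≤ eucSetDist (dyadicCube p.1 p.2) Ωᶜ / eucDiam (dyadicCube p.1 p.2) ∧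
      eucSetDist (dyadicCube p.1 p.2) Ωᶜ / eucDiam (dyadicCube p.1 p.2) ≤ 15 * R := by
  have hpos : 0 < √(n : ℝ) * 2 ^ p.1 := by
    have : 0 < √(n : ℝ) := Real.sqrt_pos.2 (Nat.cast_pos.2 hn)
    positivity
  rw [eucDiam_dyadicCube, le_div_iff₀ hpos, div_le_iff₀ hpos]
  refine ⟨isAdmissible_of_mem_indices hp, ?_⟩
  have := eucSetDist_le_of_mem_indices hR hc hp
  nlinarith

lemma dilate_subset (hn : 1 ≤ n) (hR : 0 < R) (hp : p ∈ indices R Ω) :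
    hCube (dyadicCenter p.1 p.2) (R * (2 ^ p.1 / 2)) ⊆ Ω := by
  intro z hz
  by_contra hzΩ
  have h1 := (isAdmissible_of_mem_indices hp).trans
    (eucSetDist_le (center_mem_hCube (by positivity)) (mem_compl hzΩ))
  have h2 := eucDist_center_le_of_mem_hCube (by positivity) hz
  have : 0 < R * (√(n : ℝ) * 2 ^ p.1) := by
    have : 0 < √(n : ℝ) := Real.sqrt_pos.2 (Nat.cast_pos.2 hn)
    positivity
  linarith

lemma le_eucSetDist_of_mem_dilate (hR : 0 ≤ R) (hc : Ωᶜ.Nonempty) (hp : p ∈ indices R Ω)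
    (hx : x ∈ hCube (dyadicCenter p.1 p.2) (R * (2 ^ p.1 / 2))) :
    9 / 2 * R * (√n * 2 ^ p.1) ≤ eucSetDist {x} Ωᶜ := by
  have hle : eucSetDist (dyadicCube p.1 p.2) Ωᶜ ≤
      eucSetDist {x} Ωᶜ + eucDist (dyadicCenter p.1 p.2) x :=
    eucSetDist_le_add (center_mem_hCube (by positivity)) (singleton_nonempty x) hc
      fun a ha => (mem_singleton_iff.1 ha).symm ▸ le_rfl
  have h1 := isAdmissible_of_mem_indices hp
  have h2 := eucDist_center_le_of_mem_hCube (by positivity) hx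
  unfold IsAdmissible at h1
  linarith

lemma eucSetDist_le_of_mem_dilate (hR : 1 ≤ R) (hc : Ωᶜ.Nonempty) (hp : p ∈ indices R Ω)
    (hx : x ∈ hCube (dyadicCenter p.1 p.2) (R * (2 ^ p.1 / 2))) :
    eucSetDist {x} Ωᶜ ≤ 13 * R * (√n * 2 ^ p.1) := by
  have hcx := eucDist_center_le_of_mem_hCube (by positivity) hx
  have hle : eucSetDist {x} Ωᶜ ≤ eucSetDist (dyadicCube p.1 p.2) Ωᶜ +
      (√n * (R * (2 ^ p.1 / 2)) + √n * (2 ^ p.1 / 2)) :=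
    eucSetDist_le_add rfl ⟨_, center_mem_hCube (by positivity)⟩ hc fun a ha =>
      calc eucDist x a ≤ eucDist x (dyadicCenter p.1 p.2) + eucDist (dyadicCenter p.1 p.2) a :=
            eucDist_triangle _ _ _
        _ ≤ _ := by
          rw [eucDist_comm]
          exact add_le_add hcx (eucDist_center_le_of_mem_hCube (by positivity) ha)
  have hR' : 1 * (√n * 2 ^ p.1) ≤ R * (√n * 2 ^ p.1) :=
    mul_le_mul_of_nonneg_right hR (by positivity)
  linarith [eucSetDist_le_of_mem_indices hR hc hp]

lemma card_le_of_mem_dilate (hn : 1 ≤ n) (hR : 1 ≤ R) (hΩ : IsOpen Ω) (hc : Ωᶜ.Nonempty)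
    (hx : x ∈ Ω) (F : Finset (indices R Ω))
    (hF : ∀ p ∈ F, x ∈ hCube (dyadicCenter p.1.1 p.1.2) (R * (2 ^ p.1.1 / 2))) :
    (F.card : ℝ≥0∞) ≤ ENNReal.ofReal ((3 * (R + 1)) ^ n) := by
  have hRn : 0 < R * √(n : ℝ) := by
    have : 0 < √(n : ℝ) := Real.sqrt_pos.2 (Nat.cast_pos.2 hn)
    positivity
  set a := eucSetDist {x} Ωᶜ / (13 * R * √n) with ha_def
  have hδ : eucSetDist {x} Ωᶜ = 13 * (R * √n) * a := by
    rw [ha_def]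
    field_simp
  have ha : 0 < a := div_pos (eucSetDist_singleton_pos hΩ hc hx) (by linarith)
  have hside : ∀ p ∈ F, a ≤ 2 ^ p.1.1 ∧ 2 ^ p.1.1 ≤ 3 * a := fun p hp => by
    have hlo := le_eucSetDist_of_mem_dilate (by linarith) hc p.2 (hF p hp)
    have hhi := eucSetDist_le_of_mem_dilate hR hc p.2 (hF p hp)
    rw [hδ] at hlo hhi
    constructor <;> nlinarith [zpow_pos (two_pos (α := ℝ)) p.1.1]
  have hcount := card_mul_le_measure_of_pairwiseDisjoint (μ := volume) (S := F)
    (E := fun p => dyadicCube p.1.1 p.1.2) (B := hCube x (3 * (R + 1) * a / 2))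
    (a := ENNReal.ofReal (a ^ n))
    (fun p _ q _ hpq => pairwiseDisjoint_indices (by linarith) hc p.2 q.2
      (Subtype.coe_injective.ne hpq))
    (fun p _ => measurableSet_hCube _ _)
    (fun p hp => (hCube_subset_hCube_of_mem (hF p hp)).trans
      (hCube_mono (by nlinarith [hside p hp])))
    (fun p hp => by
      rw [dyadicCube, volume_hCube _ (by positivity), mul_div_cancel₀ _ two_ne_zero]
      exact ENNReal.ofReal_le_ofReal (pow_le_pow_left₀ ha.le (hside p hp).1 n))
  rw [volume_hCube _ (by positivity), mul_div_cancel₀ _ two_ne_zero, mul_pow,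
    ENNReal.ofReal_mul (by positivity)] at hcount
  exact (ENNReal.mul_le_mul_iff_left (by simp [pow_pos ha]) ENNReal.ofReal_ne_top).1 hcount

lemma tsum_indicator_dilate_le (hn : 1 ≤ n) (hR : 1 ≤ R) (hΩ : IsOpen Ω) (hc : Ωᶜ.Nonempty)
    (x : Fin n → ℝ) :
    ∑' p : indices R Ω, (hCube (dyadicCenter p.1.1 p.1.2) (R * (2 ^ p.1.1 / 2))).indicator 1 x ≤
      ENNReal.ofReal ((3 * (R + 1)) ^ n) * Ω.indicator 1 x := by
  by_cases hx : x ∈ Ω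
  · rw [indicator_of_mem hx, Pi.one_apply, mul_one]
    exact tsum_indicator_one_le fun F hF => card_le_of_mem_dilate hn hR hΩ hc hx F hF
  · have hzero : ∀ p : indices R Ω,
        (hCube (dyadicCenter p.1.1 p.1.2) (R * (2 ^ p.1.1 / 2))).indicator 1 x = (0 : ℝ≥0∞) :=
      fun p => indicator_of_notMem (fun h => hx (dilate_subset hn (by linarith) p.2 h)) _
    simp [hzero]

lemma iUnion_dyadicCube_indices (hn : 1 ≤ n) (hR : 1 ≤ R) (hΩ : IsOpen Ω) (hc : Ωᶜ.Nonempty) :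
    ⋃ p : indices R Ω, dyadicCube p.1.1 p.1.2 = Ω := by
  refine subset_antisymm (iUnion_subset fun p => ?_) fun x hx => ?_
  · exact (hCube_mono (le_mul_of_one_le_left (by positivity) hR)).trans
      (dilate_subset hn (by linarith) p.2)
  · obtain ⟨p, hp, hxp⟩ := exists_mem_indices hn (by linarith) hΩ hc hx
    exact mem_iUnion.2 ⟨⟨p, hp⟩, hxp⟩

/-- Near a boundary point of `Ω` the Whitney cubes are arbitrarily small. -/
lemma exists_mem_indices_lt (hn : 1 ≤ n) (hR : 0 < R) (hΩ : IsOpen Ω) (hne : Ω.Nonempty)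
    (hc : Ωᶜ.Nonempty) (K : ℤ) : ∃ p ∈ indices R Ω, p.1 < K := by
  obtain ⟨b, hb⟩ := nonempty_frontier_iff.2 ⟨hne, nonempty_compl.1 hc⟩
  rw [hΩ.frontier_eq] at hb
  obtain ⟨y, hy, hby⟩ := Metric.mem_closure_iff.1 hb.1 (5 * R * 2 ^ K) (by positivity)
  obtain ⟨p, hp, hyp⟩ := exists_mem_indices hn hR hΩ hc hy
  refine ⟨p, hp, (zpow_lt_zpow_iff_right₀ (by norm_num : (1 : ℝ) < 2)).1 ?_⟩
  have hsqrt : 0 < √(n : ℝ) := Real.sqrt_pos.2 (Nat.cast_pos.2 hn)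
  have h1 := (isAdmissible_of_mem_indices hp).le_eucSetDist_singleton hc hyp
  have h2 : eucSetDist {y} Ωᶜ ≤ √n * dist b y := by
    rw [dist_comm]
    exact (eucSetDist_le (mem_singleton y) (mem_compl hb.2)).trans (eucDist_le_sqrt_mul_dist y b)
  have h3 := mul_lt_mul_of_pos_left hby hsqrt
  have h4 : (5 * R * √n) * 2 ^ p.1 < (5 * R * √n) * 2 ^ K := by linarith
  exact lt_of_mul_lt_mul_left h4 (by positivity)

lemma infinite_indices (hn : 1 ≤ n) (hR : 0 < R) (hΩ : IsOpen Ω) (hne : Ω.Nonempty)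
    (hc : Ωᶜ.Nonempty) : (indices R Ω).Infinite :=
  Infinite.of_image Prod.fst <| infinite_of_forall_exists_lt fun K => by
    obtain ⟨p, hp, hK⟩ := exists_mem_indices_lt hn hR hΩ hne hc K
    exact ⟨p.1, mem_image_of_mem _ hp, hK⟩

end Whitney

/-- **Whitney covering lemma with parameter `R`.** For every `R ≥ 1` there is
`C = C(n,R)` such that every nonempty proper open set `Ω ⊆ ℝⁿ` can be written as a
disjoint union of (half-open) cubes `Q_j` with
`5R ≤ dist(Q_j, ℝⁿ∖Ω)/diam(Q_j) ≤ 15R` and `∑_j χ_{RQ_j} ≤ C χ_Ω`. -/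
theorem statement14 (n : ℕ) (hn : 1 ≤ n) (R : ℝ) (hR : 1 ≤ R) :
    ∃ C > (0 : ℝ),
      ∀ Ω : Set (Fin n → ℝ), IsOpen Ω → Ω.Nonempty → Ω ≠ Set.univ →
        ∃ (cj : ℕ → Fin n → ℝ) (rj : ℕ → ℝ),
          (∀ j, 0 < rj j) ∧
          (Pairwise fun i j => Disjoint (hCube (cj i) (rj i)) (hCube (cj j) (rj j))) ∧
          Ω = ⋃ j, hCube (cj j) (rj j) ∧
          (∀ j, 5 * R ≤ eucSetDist (hCube (cj j) (rj j)) Ωᶜ / eucDiam (hCube (cj j) (rj j)) ∧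
            eucSetDist (hCube (cj j) (rj j)) Ωᶜ / eucDiam (hCube (cj j) (rj j)) ≤ 15 * R) ∧
          (∀ x, ∑' j : ℕ, (hCube (cj j) (R * rj j)).indicator (1 : (Fin n → ℝ) → ℝ≥0∞) x ≤
            ENNReal.ofReal C * Ω.indicator 1 x) := by
  refine ⟨(3 * (R + 1)) ^ n, by positivity, fun Ω hΩ hne hΩu => ?_⟩
  have hc : Ωᶜ.Nonempty := nonempty_compl.2 hΩu
  have := (Whitney.infinite_indices hn (by linarith) hΩ hne hc).to_subtype
  obtain ⟨e⟩ : Nonempty (ℕ ≃ Whitney.indices R Ω) := nonempty_equiv_of_countable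
  refine ⟨fun j => dyadicCenter (e j).1.1 (e j).1.2, fun j => 2 ^ (e j).1.1 / 2,
    fun j => by positivity, fun i j hij => ?_, ?_, fun j => Whitney.ratio_mem_Icc hn hR hc (e j).2,
    fun x => ?_⟩
  · exact Whitney.pairwiseDisjoint_indices (by linarith) hc (e i).2 (e j).2
      (Subtype.coe_injective.ne (e.injective.ne hij))
  · exact ((e.surjective.iUnion_comp fun p => dyadicCube p.1.1 p.1.2).trans
      (Whitney.iUnion_dyadicCube_indices hn hR hΩ hc)).symm
  · exact (e.tsum_eq fun p : Whitney.indices R Ω =>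
      (hCube (dyadicCenter p.1.1 p.1.2) (R * (2 ^ p.1.1 / 2))).indicator 1 x).trans_le
      (Whitney.tsum_indicator_dilate_le hn hR hΩ hc x)
end
end

section
/- Let $n \ge 1$. There is a constant $C_n > 0$ depending only on $n$ such that the following holds: let $f$ be a locally integrable function on $\mathbb{R}^n$, $k \in \mathbb{Z}$, $N \ge 1$ an integer, and let $P$ be a cube such that there exists a point $z \in \mathbb{R}^n$ with $Mf(z) \le 2^{k-N}$ and $\operatorname{dist}(z, P) \le 15 \operatorname{diam}(P)$. Then $|\{x : Mf(x) > 2^k\} \cap 5P| \le C_n \, 2^{-N} |P|$. -/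
/-!
Write `g = |f|` and let `z` be the point with `Mg(z) ≤ 2^(k-N)`. If `2^N < 5^n` the bound is
trivial, as `|5P| = 5^n |P|`. Otherwise no cube `Q = B(c, r)` on which `g` averages more than
`2^k` can have `dist(z, c) ≤ 4r`: then `Q ⊆ B(z, 5r)`, so the average of `g` over `Q` is at most
`5^n Mg(z) ≤ 5^n 2^(k-N) ≤ 2^k`. So the cubes witnessing `Mg > 2^k` at points of `5P` have
radius small compared with `dist(z, 5P)` and all lie in a cube `B` about `z` of side comparable to
that of `P`. The Vitali covering lemma then gives
`|{Mg > 2^k} ∩ 5P| ≤ 4^n 2^(-k) ∫_B g ≤ 4^n 2^(-N) |B|`.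
-/

open MeasureTheory ENNReal Metric Set Filter

noncomputable section

/-- The Hardy–Littlewood maximal function of a real-valued function. -/
def mAbs (n : ℕ) (f : (Fin n → ℝ) → ℝ) : (Fin n → ℝ) → ℝ≥0∞ :=
  maxOp n fun y => ENNReal.ofReal |f y|

section

variable {n : ℕ}

lemma volume_closedBall_mul (x y : Fin n → ℝ) {a r : ℝ} (ha : 0 ≤ a) (hr : 0 ≤ r) :
    volume (closedBall x (a * r)) = ENNReal.ofReal a ^ n * volume (closedBall y r) := by
  rw [Real.volume_pi_closedBall _ (by positivity), Real.volume_pi_closedBall _ hr,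
    ← ENNReal.ofReal_pow ha, ← ENNReal.ofReal_mul (by positivity), Fintype.card_fin,
    ← mul_pow]
  ring_nf

lemma exists_mul_volume_lt_setLIntegral_of_lt_maxOp {g : (Fin n → ℝ) → ℝ≥0∞}
    {x : Fin n → ℝ} {t : ℝ≥0∞} (h : t < maxOp n g x) :
    ∃ c r, 0 < r ∧ x ∈ closedBall c r ∧
      t * volume (closedBall c r) < ∫⁻ y in closedBall c r, g y := by
  simp only [maxOp, lt_iSup_iff] at h
  obtain ⟨c, r, hr, hx, h⟩ := h
  refine ⟨c, r, hr, hx, ?_⟩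
  rwa [← ENNReal.lt_div_iff_mul_lt (Or.inl (measure_closedBall_pos volume c hr).ne')
    (Or.inl measure_closedBall_lt_top.ne), ENNReal.div_eq_inv_mul]

lemma setLIntegral_closedBall_le_of_maxOp_le {g : (Fin n → ℝ) → ℝ≥0∞} {x c : Fin n → ℝ}
    {r : ℝ} {s : ℝ≥0∞} (hr : 0 < r) (hx : x ∈ closedBall c r) (h : maxOp n g x ≤ s) :
    ∫⁻ y in closedBall c r, g y ≤ s * volume (closedBall c r) := by
  have havg : (volume (closedBall c r))⁻¹ * ∫⁻ y in closedBall c r, g y ≤ maxOp n g x :=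
    le_iSup_of_le c <| le_iSup_of_le r <| le_iSup_of_le hr <| le_iSup_of_le hx le_rfl
  rw [← ENNReal.div_eq_inv_mul, ENNReal.div_le_iff (measure_closedBall_pos volume c hr).ne'
    measure_closedBall_lt_top.ne] at havg
  exact havg.trans (by gcongr)

theorem volume_le_setLIntegral_div_of_forall_exists_closedBall {E S : Set (Fin n → ℝ)}
    (g : (Fin n → ℝ) → ℝ≥0∞) {t : ℝ≥0∞} (ht0 : t ≠ 0) (ht : t ≠ ⊤) (R : ℝ)
    (h : ∀ a ∈ E, ∃ c r, 0 < r ∧ r ≤ R ∧ a ∈ closedBall c r ∧ closedBall c r ⊆ S ∧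
      t * volume (closedBall c r) ≤ ∫⁻ y in closedBall c r, g y) :
    volume E ≤ 4 ^ n * (∫⁻ y in S, g y) / t := by
  choose! c r hr hrR hac hS hint using h
  obtain ⟨u, huE, hdisj, hcover⟩ :=
    Vitali.exists_disjoint_subfamily_covering_enlargement_closedBall E c r R hrR 4 (by norm_num)
  have hu : u.Countable := hdisj.countable_of_nonempty_interior fun a ha =>
    ⟨c a, mem_interior_iff_mem_nhds.2 (closedBall_mem_nhds _ (hr a (huE ha)))⟩
  have hvol : ∀ a ∈ u,
      volume (closedBall (c a) (r a)) ≤ (∫⁻ y in closedBall (c a) (r a), g y) / t :=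
    fun a ha => (ENNReal.le_div_iff_mul_le (Or.inl ht0) (Or.inl ht)).2 <|
      (mul_comm _ _).trans_le (hint a (huE ha))
  calc volume E ≤ volume (⋃ b ∈ u, closedBall (c b) (4 * r b)) := measure_mono fun a ha =>
        let ⟨b, hb, hsub⟩ := hcover a ha
        mem_biUnion hb (hsub (hac a ha))
    _ ≤ ∑' b : u, volume (closedBall (c b) (4 * r b)) := measure_biUnion_le _ hu _
    _ = ∑' b : u, 4 ^ n * volume (closedBall (c b) (r b)) := by
        refine tsum_congr fun b => ?_
        rw [volume_closedBall_mul _ _ (by norm_num) (hr b (huE b.2)).le, ENNReal.ofReal_ofNat]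
    _ ≤ ∑' b : u, 4 ^ n * ((∫⁻ y in closedBall (c b) (r b), g y) / t) := by
        gcongr with b
        exact hvol b b.2
    _ = 4 ^ n * (∫⁻ y in ⋃ b ∈ u, closedBall (c b) (r b), g y) / t := by
        rw [lintegral_biUnion hu (fun _ _ => measurableSet_closedBall) hdisj]
        simp only [div_eq_mul_inv, ENNReal.tsum_mul_right, ENNReal.tsum_mul_left, mul_assoc]
    _ ≤ 4 ^ n * (∫⁻ y in S, g y) / t := by
        gcongr
        exact iUnion₂_subset fun b hb => hS b (huE hb)

theorem volume_superlevel_maxOp_inter_closedBall_le (g : (Fin n → ℝ) → ℝ≥0∞) {z : Fin n → ℝ}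
    {s t : ℝ≥0∞} {D : ℝ} (ht0 : t ≠ 0) (ht : t ≠ ⊤) (hD : 0 < D) (hz : maxOp n g z ≤ s)
    (hst : 5 ^ n * s ≤ t) :
    volume ({x | t < maxOp n g x} ∩ closedBall z D) ≤
      4 ^ n * (s * volume (closedBall z (2 * D))) / t := by
  have hzB : ∀ ρ > 0, ∫⁻ y in closedBall z ρ, g y ≤ s * volume (closedBall z ρ) := fun ρ hρ =>
    setLIntegral_closedBall_le_of_maxOp_le hρ (mem_closedBall_self hρ.le) hz
  refine (volume_le_setLIntegral_div_of_forall_exists_closedBall (S := closedBall z (2 * D))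
    g ht0 ht D ?_).trans (by gcongr; exact hzB _ (by positivity))
  rintro a ⟨ha, haz⟩
  obtain ⟨c, r, hr, hac, hlt⟩ := exists_mul_volume_lt_setLIntegral_of_lt_maxOp ha
  have hzc : 4 * r < dist z c := by
    by_contra! hzc
    refine hlt.not_ge ?_
    calc ∫⁻ y in closedBall c r, g y ≤ ∫⁻ y in closedBall z (5 * r), g y :=
          lintegral_mono_set (closedBall_subset_closedBall' (by rw [dist_comm]; linarith))
      _ ≤ s * volume (closedBall z (5 * r)) := hzB _ (by positivity)
      _ = 5 ^ n * s * volume (closedBall c r) := by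
          rw [volume_closedBall_mul _ c (by norm_num) hr.le, ENNReal.ofReal_ofNat]; ring
      _ ≤ t * volume (closedBall c r) := by gcongr
  have hza : dist z a ≤ D := by rw [dist_comm]; exact haz
  have hac' : dist a c ≤ r := hac
  have h3r : 3 * r < D := by linarith [dist_triangle z a c]
  refine ⟨c, r, hr, by linarith, hac, closedBall_subset_closedBall' ?_, hlt.le⟩
  linarith [dist_triangle c a z, dist_comm a z, dist_comm c a]

lemma two_zpow_sub_natCast (k : ℤ) (N : ℕ) : (2 : ℝ≥0∞) ^ (k - N) = 2 ^ k / 2 ^ N := by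
  rw [ENNReal.zpow_sub two_ne_zero ofNat_ne_top, zpow_natCast, div_eq_mul_inv]

lemma ofReal_mul_two_rpow_neg {C : ℝ} (hC : 0 ≤ C) (N : ℕ) :
    ENNReal.ofReal (C * 2 ^ (-(N : ℝ))) = ENNReal.ofReal C / 2 ^ N := by
  rw [ENNReal.ofReal_mul hC, Real.rpow_neg zero_le_two, Real.rpow_natCast,
    ENNReal.ofReal_inv_of_pos (by positivity), ENNReal.ofReal_pow zero_le_two,
    ENNReal.ofReal_ofNat, div_eq_mul_inv]

lemma volume_closedBall_five_mul_le {N : ℕ} (c : Fin n → ℝ) {r C : ℝ} (hr : 0 ≤ r)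
    (hC : 25 ^ n ≤ C) (hN : 2 ^ N ≤ 5 ^ n) :
    volume (closedBall c (5 * r)) ≤ ENNReal.ofReal C * volume (closedBall c r) / 2 ^ N := by
  rw [volume_closedBall_mul _ _ (by norm_num) hr, ENNReal.le_div_iff_mul_le (by simp) (by simp),
    mul_right_comm]
  gcongr
  rw [← ENNReal.ofReal_ofNat, ← ENNReal.ofReal_pow (by norm_num),
    ← ENNReal.ofReal_pow (by norm_num), ← ENNReal.ofReal_mul (by positivity)]
  refine ENNReal.ofReal_le_ofReal ?_
  calc (5 : ℝ) ^ n * 2 ^ N ≤ 5 ^ n * 5 ^ n := by gcongr; exact_mod_cast hN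
    _ = 25 ^ n := by rw [← mul_pow]; norm_num
    _ ≤ C := hC

lemma volume_superlevel_maxOp_inter_closedBall_le_div_two_pow {N : ℕ}
    (g : (Fin n → ℝ) → ℝ≥0∞) {z : Fin n → ℝ} {ρ : ℝ} (k : ℤ) (hN : 5 ^ n ≤ 2 ^ N)
    (hρ : 0 < ρ) (hz : maxOp n g z ≤ 2 ^ (k - N)) :
    volume ({x | 2 ^ k < maxOp n g x} ∩ closedBall z ρ) ≤
      4 ^ n * volume (closedBall z (2 * ρ)) / 2 ^ N := by
  have h2k0 : (2 : ℝ≥0∞) ^ k ≠ 0 := (ENNReal.zpow_pos two_ne_zero ofNat_ne_top k).ne'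
  have h2k : (2 : ℝ≥0∞) ^ k ≠ ⊤ := (ENNReal.zpow_lt_top two_ne_zero ofNat_ne_top k).ne
  rw [two_zpow_sub_natCast] at hz
  have h5 : (5 : ℝ≥0∞) ^ n * (2 ^ k / 2 ^ N) ≤ 2 ^ k :=
    calc (5 : ℝ≥0∞) ^ n * (2 ^ k / 2 ^ N) ≤ 2 ^ N * (2 ^ k / 2 ^ N) := by
          gcongr ?_ * _; exact_mod_cast hN
      _ = 2 ^ k := ENNReal.mul_div_cancel (by simp) (by simp)
  refine (volume_superlevel_maxOp_inter_closedBall_le g h2k0 h2k hρ hz h5).trans_eq ?_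
  rw [ENNReal.div_eq_inv_mul, ENNReal.div_eq_inv_mul, ENNReal.div_eq_inv_mul,
    show ∀ a b c d : ℝ≥0∞, d⁻¹ * (a * (b⁻¹ * d * c)) = d⁻¹ * d * (b⁻¹ * (a * c)) by
      intros; ring, ENNReal.inv_mul_cancel h2k0 h2k, one_mul]

lemma eucDist_le_mul_dist (x y : Fin n → ℝ) : eucDist x y ≤ n * dist x y := by
  rw [eucDist, Real.sqrt_le_left (by positivity)]
  calc ∑ i, (x i - y i) ^ 2 ≤ ∑ _i : Fin n, dist x y ^ 2 := Finset.sum_le_sum fun i _ => by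
        rw [← sq_abs, ← Real.dist_eq]
        exact pow_le_pow_left₀ dist_nonneg (dist_le_pi_dist x y i) 2
    _ = n * dist x y ^ 2 := by simp
    _ ≤ (n * dist x y) ^ 2 := by
        rw [mul_pow]
        gcongr
        exact_mod_cast Nat.le_self_pow two_ne_zero n

lemma eucDiam_closedBall_le (c : Fin n → ℝ) {r : ℝ} (hr : 0 ≤ r) :
    eucDiam (closedBall c r) ≤ n * (2 * r) := by
  refine csSup_le ⟨_, c, mem_closedBall_self hr, c, mem_closedBall_self hr, rfl⟩ ?_
  rintro d ⟨a, ha, b, hb, rfl⟩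
  have hab : dist a b ≤ 2 * r := by
    linarith [dist_triangle_right a b c, mem_closedBall.1 ha, mem_closedBall.1 hb]
  exact (eucDist_le_mul_dist a b).trans (by gcongr)

lemma dist_sub_le_eucSetDist (z c : Fin n → ℝ) {r : ℝ} (hr : 0 ≤ r) :
    dist z c - r ≤ eucSetDist {z} (closedBall c r) := by
  refine le_csInf ⟨_, z, rfl, c, mem_closedBall_self hr, rfl⟩ ?_
  rintro d ⟨a, rfl, b, hb, rfl⟩
  linarith [dist_triangle a b c, dist_le_eucDist a b, mem_closedBall.1 hb]

end

theorem statement15_general (n : ℕ) :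
    ∃ C > (0 : ℝ),
      ∀ (f : (Fin n → ℝ) → ℝ), LocallyIntegrable f volume →
      ∀ (k : ℤ) (N : ℕ), 1 ≤ N →
      ∀ (cP : Fin n → ℝ) (rP : ℝ), 0 < rP →
      (∃ z : Fin n → ℝ, mAbs n f z ≤ (2 : ℝ≥0∞) ^ (k - (N : ℤ)) ∧
        eucSetDist {z} (closedBall cP rP) ≤ 15 * eucDiam (closedBall cP rP)) →
      volume ({x | (2 : ℝ≥0∞) ^ k < mAbs n f x} ∩ closedBall cP (5 * rP)) ≤
        ENNReal.ofReal (C * 2 ^ (-(N : ℝ))) * volume (closedBall cP rP) := by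
  -- `4^n` from the Vitali enlargement times `|B(z, 2(30n+6) rP)| / |P|`; it also exceeds `25^n`.
  refine ⟨(8 * (30 * n + 6)) ^ n, by positivity, ?_⟩
  rintro f - k N - cP rP hrP ⟨z, hz, hzP⟩
  rw [ofReal_mul_two_rpow_neg (by positivity), ← ENNReal.mul_div_right_comm]
  rcases le_total (2 ^ N) (5 ^ n) with hN | hN
  · refine (measure_mono inter_subset_right).trans (volume_closedBall_five_mul_le _ hrP.le ?_ hN)
    gcongr
    linarith [(n.cast_nonneg : (0 : ℝ) ≤ n)]
  · have hR : dist z cP + 5 * rP ≤ (30 * n + 6) * rP := by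
      linarith [dist_sub_le_eucSetDist z cP hrP.le, eucDiam_closedBall_le cP (n := n) hrP.le]
    calc _ ≤ volume ({x | (2 : ℝ≥0∞) ^ k < mAbs n f x} ∩ closedBall z ((30 * n + 6) * rP)) :=
          measure_mono (inter_subset_inter_right _
            (closedBall_subset_closedBall' (by rw [dist_comm]; linarith)))
      _ ≤ 4 ^ n * volume (closedBall z (2 * (30 * n + 6) * rP)) / 2 ^ N := by
          rw [mul_assoc 2]
          exact volume_superlevel_maxOp_inter_closedBall_le_div_two_pow _ k hN (by positivity) hz
      _ = _ := by
          rw [volume_closedBall_mul z cP (by positivity) hrP.le, ← mul_assoc,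
            ← ENNReal.ofReal_ofNat, ← ENNReal.ofReal_pow (by norm_num),
            ← ENNReal.ofReal_pow (by positivity), ← ENNReal.ofReal_mul (by positivity), ← mul_pow]
          ring_nf

/-- **Claim (17) in Sawyer's Lemma 4.** There is `Cₙ > 0` such that for every locally
integrable `f`, `k ∈ ℤ`, integer `N ≥ 1` and every cube `P` for which some point `z`
with `Mf(z) ≤ 2^{k-N}` lies within distance `15 diam(P)` of `P`:
`|{Mf > 2^k} ∩ 5P| ≤ Cₙ 2^{-N} |P|`. -/
theorem statement15 (n : ℕ) (hn : 1 ≤ n) :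
    ∃ C > (0 : ℝ),
      ∀ (f : (Fin n → ℝ) → ℝ), LocallyIntegrable f volume →
      ∀ (k : ℤ) (N : ℕ), 1 ≤ N →
      ∀ (cP : Fin n → ℝ) (rP : ℝ), 0 < rP →
      (∃ z : Fin n → ℝ, mAbs n f z ≤ (2 : ℝ≥0∞) ^ (k - (N : ℤ)) ∧
        eucSetDist {z} (closedBall cP rP) ≤ 15 * eucDiam (closedBall cP rP)) →
      volume ({x | (2 : ℝ≥0∞) ^ k < mAbs n f x} ∩ closedBall cP (5 * rP)) ≤
        ENNReal.ofReal (C * 2 ^ (-(N : ℝ))) * volume (closedBall cP rP) :=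
  statement15_general n

end
end
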